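/- arXiv:0705.1794 — 2 statements merged into one kernel-verified Lean document; each statement's English description precedes it below -/
import Mathlib

section
/- Let (Ω, F, (F_n)_{n∈ℕ}, P) be a filtered probability space. Let (X_n) be a nonnegative adapted sequence of integrable random variables admitting a decomposition X_n = X_0 + A¹_n − A²_n + M_n, where (A¹_n) and (A²_n) are nondecreasing sequences with A¹_0 = A²_0 = 0 such that A¹_n and A²_n are F_{n−1}-measurable for n ≥ 1 (predictable increasing processes), and (M_n) is a martingale with M_0 = 0. Define Â_n = Σ_{i=1}^n (1 + X_{i−1} + A²_{i−1})^{−1}(A¹_i − A¹_{i−1}). Then almost surely the event {Â_∞ < ∞} is contained in the event where (X_n) converges to a finite limit and A²_∞ < ∞. -/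
/-!
Write `D = 1 + X + A²` and `P_n = ∏_{i<n} (1 + ΔÂ_i)`, where `ΔÂ_i = ΔA¹_i / D_i`. Since
`D_n + ΔA¹_n = D_n (1 + ΔÂ_n)`, the process `W = D / P` satisfies `ΔW_n = ΔM_n / P_{n+1}`: it is
the transform of `M` by the predictable integrand `1 / P_{n+1} ∈ (0, 1]`, hence a nonnegative
martingale, and it converges almost surely. On `{Â_∞ < ∞}` the product `P` converges, so
`D = W P` converges; as `X ≥ 0` and `A²` is nondecreasing, `A²` is bounded and both `A²` and `X`
converge.
-/

open MeasureTheory Filter Topology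

namespace MeasureTheory

variable {Ω : Type*} {m0 : MeasurableSpace Ω} {μ : Measure Ω} {𝒢 : Filtration ℕ m0}

theorem Martingale.sum_mul_sub [IsFiniteMeasure μ] {R : ℝ} {ξ f : ℕ → Ω → ℝ}
    (hf : Martingale f 𝒢 μ) (hξ : StronglyAdapted 𝒢 ξ) (hbdd : ∀ n ω, ξ n ω ≤ R)
    (hnonneg : ∀ n ω, 0 ≤ ξ n ω) :
    Martingale (fun n => ∑ k ∈ Finset.range n, ξ k * (f (k + 1) - f k)) 𝒢 μ := by
  refine martingale_iff.2 ⟨?_, hf.submartingale.sum_mul_sub hξ hbdd hnonneg⟩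
  convert (hf.neg.submartingale.sum_mul_sub hξ hbdd hnonneg).neg using 1
  funext n ω
  simp only [Finset.sum_apply, Pi.neg_apply, Pi.mul_apply, Pi.sub_apply,
    ← Finset.sum_neg_distrib]
  exact Finset.sum_congr rfl fun k _ => by ring

theorem Martingale.exists_ae_tendsto_of_nonneg [IsFiniteMeasure μ] {f : ℕ → Ω → ℝ}
    (hf : Martingale f 𝒢 μ) (hnonneg : ∀ n ω, 0 ≤ f n ω) :
    ∀ᵐ ω ∂μ, ∃ c, Tendsto (fun n => f n ω) atTop (𝓝 c) := by
  refine hf.submartingale.exists_ae_tendsto_of_bdd (R := (∫ ω, f 0 ω ∂μ).toNNReal) fun n => ?_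
  have hint : ∫ ω, f n ω ∂μ = ∫ ω, f 0 ω ∂μ := by
    simpa using (hf.setIntegral_eq (Nat.zero_le n) MeasurableSet.univ).symm
  rw [eLpNorm_one_eq_lintegral_enorm, ← ofReal_integral_norm_eq_lintegral_enorm (hf.integrable n)]
  simp_rw [Real.norm_of_nonneg (hnonneg n _), hint]
  rfl

end MeasureTheory

theorem Real.exists_tendsto_of_tendsto_add_of_monotone {x a : ℕ → ℝ} (hx : ∀ n, 0 ≤ x n)
    (ha : Monotone a) {d : ℝ} (h : Tendsto (fun n => x n + a n) atTop (𝓝 d)) :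
    (∃ l, Tendsto x atTop (𝓝 l)) ∧ ∃ l, Tendsto a atTop (𝓝 l) := by
  obtain ⟨C, hC⟩ := h.bddAbove_range
  have ha_bdd : BddAbove (Set.range a) :=
    ⟨C, Set.forall_mem_range.2 fun n => (le_add_of_nonneg_left (hx n)).trans (hC ⟨n, rfl⟩)⟩
  have ha_lim := tendsto_atTop_ciSup ha ha_bdd
  exact ⟨⟨_, (h.sub ha_lim).congr fun n => add_sub_cancel_right _ _⟩, ⟨_, ha_lim⟩⟩

section NormalizedCompensator

variable {Ω : Type*} (X A1 A2 : ℕ → Ω → ℝ)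

/-- The increment `Â_{i+1} - Â_i`. -/
noncomputable def normalizedIncrement (i : ℕ) (ω : Ω) : ℝ :=
  (1 + X i ω + A2 i ω)⁻¹ * (A1 (i + 1) ω - A1 i ω)

noncomputable def normalizedProduct (n : ℕ) (ω : Ω) : ℝ :=
  ∏ i ∈ Finset.range n, (1 + normalizedIncrement X A1 A2 i ω)

noncomputable def discountedProcess (n : ℕ) (ω : Ω) : ℝ :=
  (1 + X n ω + A2 n ω) / normalizedProduct X A1 A2 n ω

variable {X A1 A2} {ω : Ω}

theorem normalizedIncrement_nonneg {i : ℕ} (hD : 0 ≤ 1 + X i ω + A2 i ω)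
    (hA1 : A1 i ω ≤ A1 (i + 1) ω) : 0 ≤ normalizedIncrement X A1 A2 i ω :=
  mul_nonneg (inv_nonneg.2 hD) (sub_nonneg.2 hA1)

theorem normalizedProduct_zero : normalizedProduct X A1 A2 0 ω = 1 := by
  simp [normalizedProduct]

theorem normalizedProduct_succ (n : ℕ) : normalizedProduct X A1 A2 (n + 1) ω =
    normalizedProduct X A1 A2 n ω * (1 + normalizedIncrement X A1 A2 n ω) :=
  Finset.prod_range_succ _ _

theorem one_le_normalizedProduct (hδ : ∀ i, 0 ≤ normalizedIncrement X A1 A2 i ω) (n : ℕ) :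
    1 ≤ normalizedProduct X A1 A2 n ω :=
  Finset.one_le_prod fun i _ => le_add_of_nonneg_right (hδ i)

theorem exists_tendsto_normalizedProduct
    (hsum : Summable fun i => normalizedIncrement X A1 A2 i ω) :
    ∃ p, Tendsto (fun n => normalizedProduct X A1 A2 n ω) atTop (𝓝 p) :=
  ⟨_, (Real.multipliable_one_add_of_summable hsum).tendsto_prod_tprod_nat⟩

theorem discountedProcess_zero : discountedProcess X A1 A2 0 ω = 1 + X 0 ω + A2 0 ω := by
  simp [discountedProcess, normalizedProduct_zero]

theorem discountedProcess_mul_normalizedProduct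
    (hδ : ∀ i, 0 ≤ normalizedIncrement X A1 A2 i ω) (n : ℕ) :
    discountedProcess X A1 A2 n ω * normalizedProduct X A1 A2 n ω = 1 + X n ω + A2 n ω :=
  div_mul_cancel₀ _ (zero_lt_one.trans_le (one_le_normalizedProduct hδ n)).ne'

theorem discountedProcess_nonneg (hD : ∀ n, 0 ≤ 1 + X n ω + A2 n ω)
    (hδ : ∀ i, 0 ≤ normalizedIncrement X A1 A2 i ω) (n : ℕ) :
    0 ≤ discountedProcess X A1 A2 n ω :=
  div_nonneg (hD n) (zero_le_one.trans (one_le_normalizedProduct hδ n))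

theorem discountedProcess_succ {M : ℕ → Ω → ℝ} {n : ℕ} (hD : 0 < 1 + X n ω + A2 n ω)
    (hδ : ∀ i, 0 ≤ normalizedIncrement X A1 A2 i ω)
    (hdecomp : ∀ n, X n ω = X 0 ω + A1 n ω - A2 n ω + M n ω) :
    discountedProcess X A1 A2 (n + 1) ω = discountedProcess X A1 A2 n ω +
      (normalizedProduct X A1 A2 (n + 1) ω)⁻¹ * (M (n + 1) ω - M n ω) := by
  have hP := zero_lt_one.trans_le (one_le_normalizedProduct hδ n)
  have hD_succ : 1 + X (n + 1) ω + A2 (n + 1) ω =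
      (1 + X n ω + A2 n ω) + (A1 (n + 1) ω - A1 n ω) + (M (n + 1) ω - M n ω) := by
    linarith [hdecomp (n + 1), hdecomp n]
  have hfactor : 1 + normalizedIncrement X A1 A2 n ω =
      ((1 + X n ω + A2 n ω) + (A1 (n + 1) ω - A1 n ω)) / (1 + X n ω + A2 n ω) := by
    rw [normalizedIncrement]; field_simp
  have hfactor_pos : 0 < 1 + normalizedIncrement X A1 A2 n ω := by linarith [hδ n]
  rw [hfactor] at hfactor_pos
  have hnum_pos := (div_pos_iff_of_pos_right hD).1 hfactor_pos
  simp only [discountedProcess, normalizedProduct_succ, hfactor, hD_succ]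
  field_simp

theorem discountedProcess_eq_sum {M : ℕ → Ω → ℝ} (hD : ∀ n, 0 < 1 + X n ω + A2 n ω)
    (hδ : ∀ i, 0 ≤ normalizedIncrement X A1 A2 i ω)
    (hdecomp : ∀ n, X n ω = X 0 ω + A1 n ω - A2 n ω + M n ω) (n : ℕ) :
    discountedProcess X A1 A2 n ω = discountedProcess X A1 A2 0 ω +
      ∑ k ∈ Finset.range n, (normalizedProduct X A1 A2 (k + 1) ω)⁻¹ * (M (k + 1) ω - M k ω) := by
  induction n with
  | zero => simp
  | succ n ih => rw [discountedProcess_succ (hD n) hδ hdecomp, ih, Finset.sum_range_succ, add_assoc]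

variable {m0 : MeasurableSpace Ω} {ℱ : Filtration ℕ m0}

theorem adapted_normalizedIncrement (hX : Adapted ℱ X) (hA1 : IsStronglyPredictable ℱ A1)
    (hA2 : StronglyAdapted ℱ A2) : Adapted ℱ (normalizedIncrement X A1 A2) := fun i =>
  ((measurable_const.add (hX i)).add (hA2 i).measurable).inv.mul
    ((hA1.measurable_add_one i).measurable.sub (hA1.stronglyAdapted i).measurable)

theorem adapted_normalizedProduct_succ (hX : Adapted ℱ X) (hA1 : IsStronglyPredictable ℱ A1)
    (hA2 : StronglyAdapted ℱ A2) : Adapted ℱ fun n => normalizedProduct X A1 A2 (n + 1) :=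
  fun _ => Finset.measurable_prod _ fun i hi => measurable_const.add <|
    (adapted_normalizedIncrement hX hA1 hA2 i).mono (ℱ.mono (Finset.mem_range_succ_iff.1 hi)) le_rfl

theorem martingale_discountedProcess {μ : Measure Ω} [IsFiniteMeasure μ] {M : ℕ → Ω → ℝ}
    (hM : Martingale M ℱ μ) (hX : Adapted ℱ X) (hX0_int : Integrable (X 0) μ)
    (hA1 : IsStronglyPredictable ℱ A1) (hA2 : StronglyAdapted ℱ A2) (hA20_int : Integrable (A2 0) μ)
    (hD : ∀ n ω, 0 < 1 + X n ω + A2 n ω) (hδ : ∀ i ω, 0 ≤ normalizedIncrement X A1 A2 i ω)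
    (hdecomp : ∀ n ω, X n ω = X 0 ω + A1 n ω - A2 n ω + M n ω) :
    Martingale (discountedProcess X A1 A2) ℱ μ := by
  have hW0 : discountedProcess X A1 A2 0 = fun ω => 1 + X 0 ω + A2 0 ω :=
    funext fun _ => discountedProcess_zero
  have hW0_meas : StronglyMeasurable[ℱ ⊥] (discountedProcess X A1 A2 0) := by
    rw [hW0]
    exact ((measurable_const.add (hX 0)).add (hA2 0).measurable).stronglyMeasurable
  have hW0_int : Integrable (discountedProcess X A1 A2 0) μ := by
    rw [hW0]
    exact ((integrable_const 1).add hX0_int).add hA20_int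
  have hξ : StronglyAdapted ℱ fun n ω => (normalizedProduct X A1 A2 (n + 1) ω)⁻¹ :=
    fun n => (adapted_normalizedProduct_succ hX hA1 hA2 n).inv.stronglyMeasurable
  have hP (n : ℕ) (ω : Ω) := one_le_normalizedProduct (hδ · ω) (n + 1)
  convert (martingale_const_fun ℱ μ hW0_meas hW0_int).add (hM.sum_mul_sub hξ
    (fun n ω => inv_le_one_of_one_le₀ (hP n ω))
    fun n ω => inv_nonneg.2 (zero_le_one.trans (hP n ω))) using 1
  funext n ω
  simp only [Pi.add_apply, Finset.sum_apply, Pi.mul_apply, Pi.sub_apply]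
  exact discountedProcess_eq_sum (hD · ω) (hδ · ω) (hdecomp · ω) n

end NormalizedCompensator

theorem semimartingale_convergence_sets_discrete_general
    {Ω : Type*} {m : MeasurableSpace Ω} {μ : Measure Ω} [IsProbabilityMeasure μ]
    (ℱ : Filtration ℕ m)
    (X M A1 A2 : ℕ → Ω → ℝ)
    (hXadp : Adapted ℱ X) (hX0 : ∀ n ω, 0 ≤ X n ω) (hXint : ∀ n, Integrable (X n) μ)
    (hA1mono : ∀ ω, Monotone fun n => A1 n ω) (hA2mono : ∀ ω, Monotone fun n => A2 n ω)
    (hA10 : ∀ ω, A1 0 ω = 0) (hA20 : ∀ ω, A2 0 ω = 0)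
    (hA1pred : ∀ n : ℕ, StronglyMeasurable[ℱ n] (A1 (n + 1)))
    (hA2pred : ∀ n : ℕ, StronglyMeasurable[ℱ n] (A2 (n + 1)))
    (hM : Martingale M ℱ μ)
    (hdecomp : ∀ n ω, X n ω = X 0 ω + A1 n ω - A2 n ω + M n ω) :
    ∀ᵐ ω ∂μ,
      (Summable fun i => (1 + X i ω + A2 i ω)⁻¹ * (A1 (i + 1) ω - A1 i ω)) →
        ((∃ l : ℝ, Tendsto (fun n => X n ω) atTop (𝓝 l)) ∧
          ∃ l : ℝ, Tendsto (fun n => A2 n ω) atTop (𝓝 l)) := by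
  have hA1 : IsStronglyPredictable ℱ A1 :=
    .of_measurable_add_one ((funext hA10 : A1 0 = 0) ▸ stronglyMeasurable_zero) hA1pred
  have hA2 : IsStronglyPredictable ℱ A2 :=
    .of_measurable_add_one ((funext hA20 : A2 0 = 0) ▸ stronglyMeasurable_zero) hA2pred
  have hA2int : Integrable (A2 0) μ := (funext hA20 : A2 0 = 0) ▸ integrable_zero _ _ _
  have hD (n : ℕ) (ω : Ω) : 0 < 1 + X n ω + A2 n ω := by
    have hA2_nonneg : 0 ≤ A2 n ω := hA20 ω ▸ hA2mono ω (Nat.zero_le n)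
    linarith [hX0 n ω]
  have hδ (i : ℕ) (ω : Ω) : 0 ≤ normalizedIncrement X A1 A2 i ω :=
    normalizedIncrement_nonneg (hD i ω).le (hA1mono ω i.le_succ)
  have hW := martingale_discountedProcess hM hXadp (hXint 0) hA1 hA2.stronglyAdapted hA2int
    hD hδ hdecomp
  filter_upwards [hW.exists_ae_tendsto_of_nonneg
    fun n ω => discountedProcess_nonneg (fun n => (hD n ω).le) (hδ · ω) n] with ω ⟨w, hw⟩ hsum
  obtain ⟨p, hp⟩ := exists_tendsto_normalizedProduct hsum
  refine Real.exists_tendsto_of_tendsto_add_of_monotone (hX0 · ω) (hA2mono ω)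
    (((hw.mul hp).sub_const 1).congr fun n => ?_)
  rw [discountedProcess_mul_normalizedProduct (hδ · ω)]
  ring

/-- Discrete-time form of Theorem 1.1: for a nonnegative adapted integrable sequence
`X_n = X_0 + A¹_n − A²_n + M_n` with `A¹, A²` predictable nondecreasing starting at `0` and `M`
a martingale with `M_0 = 0`, setting
`Â_n = Σ_{i=1}^n (1 + X_{i−1} + A²_{i−1})⁻¹ (A¹_i − A¹_{i−1})`, almost surely the event
`{Â_∞ < ∞}` is contained in the event where `(X_n)` converges to a finite limit and
`A²_∞ < ∞`. -/
theorem semimartingale_convergence_sets_discrete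
    {Ω : Type*} {m : MeasurableSpace Ω} {μ : Measure Ω} [IsProbabilityMeasure μ]
    (ℱ : Filtration ℕ m)
    (X M A1 A2 : ℕ → Ω → ℝ)
    (hXadp : Adapted ℱ X) (hX0 : ∀ n ω, 0 ≤ X n ω) (hXint : ∀ n, Integrable (X n) μ)
    (hA1mono : ∀ ω, Monotone fun n => A1 n ω) (hA2mono : ∀ ω, Monotone fun n => A2 n ω)
    (hA10 : ∀ ω, A1 0 ω = 0) (hA20 : ∀ ω, A2 0 ω = 0)
    (hA1pred : ∀ n : ℕ, StronglyMeasurable[ℱ n] (A1 (n + 1)))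
    (hA2pred : ∀ n : ℕ, StronglyMeasurable[ℱ n] (A2 (n + 1)))
    (hM : Martingale M ℱ μ) (hM0 : ∀ ω, M 0 ω = 0)
    (hdecomp : ∀ n ω, X n ω = X 0 ω + A1 n ω - A2 n ω + M n ω) :
    ∀ᵐ ω ∂μ,
      (Summable fun i => (1 + X i ω + A2 i ω)⁻¹ * (A1 (i + 1) ω - A1 i ω)) →
        ((∃ l : ℝ, Tendsto (fun n => X n ω) atTop (𝓝 l)) ∧
          ∃ l : ℝ, Tendsto (fun n => A2 n ω) atTop (𝓝 l)) :=
  semimartingale_convergence_sets_discrete_general ℱ X M A1 A2 hXadp hX0 hXint hA1mono hA2mono hA10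
    hA20 hA1pred hA2pred hM hdecomp
end

section
/- Let K: [0,∞) → [0,∞) be a continuous nondecreasing function with K_0 = 0, β ≥ 0 Borel with ∫₀ᵗ β_s dK_s < ∞ for all t and ∫₀^∞ β_s dK_s = ∞, and ℓ Borel with ∫₀^∞ ℓ_s² dK_s < ∞; set Γ_t = exp(∫₀ᵗ β_s dK_s) and ⟨L⟩_t = 1 + ∫₀ᵗ Γ_s² ℓ_s² dK_s, and assume ⟨L⟩_t → ∞ as t → ∞. Let α: [0,∞) → [0,∞) be Borel with α_t → α ∈ (0,∞) as t → ∞. Define ε_t^{(α)} = 1 + ∫₀ᵗ α_s β_s ⟨L⟩_s^{−1} Γ_s² dK_s, B_t^{(α)} = ∫₀ᵗ α_s β_s ⟨L⟩_s^{−1} Γ_s dK_s, and B̃_t^{(α)} = ∫₀ᵗ (B_t^{(α)} − B_s^{(α)})² d⟨L⟩_s, and let ε_t^{(1)} be ε_t^{(α)} with α ≡ 1. Then ε_t^{(1)} B̃_t^{(α)} / (ε_t^{(α)})² → 2 as t → ∞. -/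
open MeasureTheory Set Filter Topology

/-- `Γ_t = exp(∫₀ᵗ β_s dK_s)`. -/
noncomputable def Gam (K : StieltjesFunction ℝ) (β : ℝ → ℝ) (t : ℝ) : ℝ :=
  Real.exp (∫ s in Ioc 0 t, β s ∂K.measure)

/-- `⟨L⟩_t = 1 + ∫₀ᵗ Γ_s² ℓ_s² dK_s`. -/
noncomputable def angL (K : StieltjesFunction ℝ) (β ℓ : ℝ → ℝ) (t : ℝ) : ℝ :=
  1 + ∫ s in Ioc 0 t, (Gam K β s) ^ 2 * ℓ s ^ 2 ∂K.measure

/-- `ε_t^{(α)} = 1 + ∫₀ᵗ α_s β_s ⟨L⟩_s^{−1} Γ_s² dK_s`. -/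
noncomputable def epsAlpha (K : StieltjesFunction ℝ) (β ℓ α : ℝ → ℝ) (t : ℝ) : ℝ :=
  1 + ∫ s in Ioc 0 t, α s * β s * (angL K β ℓ s)⁻¹ * (Gam K β s) ^ 2 ∂K.measure

/-- `B_t^{(α)} = ∫₀ᵗ α_s β_s ⟨L⟩_s^{−1} Γ_s dK_s` (that is, `∫₀ᵗ Γ_s⁻¹ dε_s^{(α)}`). -/
noncomputable def BAlpha (K : StieltjesFunction ℝ) (β ℓ α : ℝ → ℝ) (t : ℝ) : ℝ :=
  ∫ s in Ioc 0 t, α s * β s * (angL K β ℓ s)⁻¹ * Gam K β s ∂K.measure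

/-- `B̃_t^{(α)} = ∫₀ᵗ (B_t^{(α)} − B_s^{(α)})² d⟨L⟩_s`; since `K` is continuous,
`d⟨L⟩_s = Γ_s² ℓ_s² dK_s`. -/
noncomputable def BtildeAlpha (K : StieltjesFunction ℝ) (β ℓ α : ℝ → ℝ) (t : ℝ) : ℝ :=
  ∫ s in Ioc 0 t,
    (BAlpha K β ℓ α t - BAlpha K β ℓ α s) ^ 2 * (Gam K β s) ^ 2 * ℓ s ^ 2 ∂K.measure

/-!
Put `I_t = ∫₀ᵗ β ⟨L⟩⁻¹ Γ² dK = ε_t^{(1)} - 1`. Since `⟨L⟩ ≤ (1 + ∫ ℓ² dK) Γ²`, the integrand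
dominates a multiple of `β`, so `I_t → ∞`. A Toeplitz lemma (if `w_s → c` then
`∫₀ᵗ w g dK = c ∫₀ᵗ g dK + o(∫₀ᵗ g dK)`) then gives `ε^{(α)} ~ a I` at once.

For `B̃`, integration by parts (Fubini on the triangle `s < u`, legitimate because `K` has no
atoms) gives `B̃_t = 2 ∫₀ᵗ P_s dB_s` with `P_s = ∫₀ˢ (⟨L⟩ - 1) dB`. Since
`(⟨L⟩ - 1) dB = α (1 - ⟨L⟩⁻¹) Γ β dK`, `⟨L⟩ → ∞`, and `Γ = 1 + ∫ Γ β dK` (the chain rule for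
`exp`, proved from the power series), Toeplitz gives `P_s / Γ_s → a`. As
`P dB = (P / Γ) α dε^{(1)}`, Toeplitz once more gives `B̃ ~ 2 a² I`, and the quotient
`ε^{(1)} B̃ / (ε^{(α)})²` is asymptotic to `I · 2a²I / (aI)² = 2`.
-/

open Asymptotics

theorem tendsto_div_one_add_of_isLittleO {X N : ℝ → ℝ} {a : ℝ} (hN : Tendsto N atTop atTop)
    (h : (fun t => X t - a * N t) =o[atTop] N) :
    Tendsto (fun t => X t / (1 + N t)) atTop (𝓝 a) := by
  have ha : (fun _ => a) =o[atTop] N :=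
    isLittleO_const_left.2 (Or.inr (tendsto_norm_atTop_atTop.comp hN))
  have hN1 : N =O[atTop] fun t => 1 + N t := IsBigO.of_bound 1 <| by
    filter_upwards [hN.eventually_ge_atTop 0] with t ht
    rw [one_mul, Real.norm_of_nonneg ht, Real.norm_of_nonneg (by linarith)]
    linarith
  have hlim := (((h.sub ha).trans_isBigO hN1).tendsto_div_nhds_zero).add_const a
  rw [zero_add] at hlim
  refine hlim.congr' ?_
  filter_upwards [hN.eventually_ge_atTop 0] with t ht
  field_simp
  ring

theorem isEquivalent_const_mul_of_isLittleO {u v : ℝ → ℝ} {l : Filter ℝ} {c : ℝ} (hc : c ≠ 0)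
    (h : (fun t => u t - c * v t) =o[l] v) : u ~[l] fun t => c * v t :=
  h.trans_isBigO (isBigO_self_const_mul hc v l)

noncomputable def runningIntegral (μ : Measure ℝ) (f : ℝ → ℝ) (t : ℝ) : ℝ :=
  ∫ s in Ioc 0 t, f s ∂μ

theorem MeasureTheory.IntegrableOn.monotone_mul {μ : Measure ℝ} {G g : ℝ → ℝ} {a b : ℝ}
    (hG : Monotone G) (hg : IntegrableOn g (Ioc a b) μ) :
    IntegrableOn (fun s => G s * g s) (Ioc a b) μ := by
  refine hg.bdd_mul hG.measurable.aestronglyMeasurable (c := max |G a| |G b|) ?_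
  filter_upwards [ae_restrict_mem measurableSet_Ioc] with s hs
  exact abs_le_max_abs_abs (hG hs.1.le) (hG hs.2)

theorem MeasureTheory.IntegrableOn.antitone_mul {μ : Measure ℝ} {G g : ℝ → ℝ} {a b : ℝ}
    (hG : Antitone G) (hg : IntegrableOn g (Ioc a b) μ) :
    IntegrableOn (fun s => G s * g s) (Ioc a b) μ := by
  simpa using (hg.monotone_mul hG.neg).neg

section RunningIntegral

variable {μ : Measure ℝ} {f g : ℝ → ℝ}

theorem runningIntegral_nonneg (hf0 : ∀ s, 0 ≤ f s) (t : ℝ) : 0 ≤ runningIntegral μ f t :=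
  setIntegral_nonneg measurableSet_Ioc fun s _ => hf0 s

theorem runningIntegral_const_mul (c : ℝ) (t : ℝ) :
    runningIntegral μ (fun s => c * f s) t = c * runningIntegral μ f t :=
  integral_const_mul c f

theorem runningIntegral_add_integral_Ioc {T t : ℝ} (hT : 0 ≤ T) (hTt : T ≤ t)
    (hf : IntegrableOn f (Ioc 0 t) μ) :
    runningIntegral μ f T + ∫ s in Ioc T t, f s ∂μ = runningIntegral μ f t := by
  rw [runningIntegral, runningIntegral, ← Ioc_union_Ioc_eq_Ioc hT hTt] at *
  exact (setIntegral_union (Ioc_disjoint_Ioc_of_le le_rfl) measurableSet_Ioc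
    (hf.mono_set subset_union_left) (hf.mono_set subset_union_right)).symm

theorem monotone_runningIntegral (hf0 : ∀ s, 0 ≤ f s)
    (hf : ∀ t, IntegrableOn f (Ioc 0 t) μ) : Monotone (runningIntegral μ f) := fun _ t hst =>
  setIntegral_mono_set (hf t) (ae_of_all _ hf0) (Ioc_subset_Ioc_right hst).eventuallyLE

theorem tendsto_runningIntegral_atTop (hf0 : ∀ s, 0 ≤ f s)
    (hf : ∀ t, IntegrableOn f (Ioc 0 t) μ)
    (htop : ∫⁻ s in Ioi 0, ENNReal.ofReal (f s) ∂μ = ⊤) :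
    Tendsto (runningIntegral μ f) atTop atTop := by
  refine tendsto_atTop_atTop_of_monotone' (monotone_runningIntegral hf0 hf) fun ⟨C, hC⟩ => ?_
  have hle : ∫⁻ s in Ioi 0, ENNReal.ofReal (f s) ∂μ ≤ ENNReal.ofReal C := by
    rw [← iUnion_Ioc_eq_Ioi_self_iff.2 fun x _ => exists_nat_ge x,
      setLIntegral_iUnion_of_directed _ (directed_of_isDirected_le fun m n hmn =>
        Ioc_subset_Ioc_right (Nat.cast_le.2 hmn))]
    refine iSup_le fun n => ?_
    rw [← ofReal_integral_eq_lintegral_ofReal (hf n) (ae_of_all _ hf0)]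
    exact ENNReal.ofReal_le_ofReal (hC (mem_range_self _))
  exact (htop ▸ hle).not_gt ENNReal.ofReal_lt_top

theorem isLittleO_runningIntegral_mul {w : ℝ → ℝ} (hg0 : ∀ s, 0 ≤ g s)
    (hg : ∀ t, IntegrableOn g (Ioc 0 t) μ)
    (hwg : ∀ t, IntegrableOn (fun s => w s * g s) (Ioc 0 t) μ)
    (hG : Tendsto (runningIntegral μ g) atTop atTop) (hw : Tendsto w atTop (𝓝 0)) :
    runningIntegral μ (fun s => w s * g s) =o[atTop] runningIntegral μ g := by
  refine isLittleO_iff.2 fun ε hε => ?_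
  obtain ⟨T, hT⟩ := eventually_atTop.1
    ((hw.eventually (Metric.closedBall_mem_nhds 0 (half_pos hε))).and (eventually_ge_atTop 0))
  have hT0 : 0 ≤ T := (hT T le_rfl).2
  set C := |runningIntegral μ (fun s => w s * g s) T|
  filter_upwards [eventually_ge_atTop T, hG.eventually_ge_atTop (2 * C / ε)] with t hTt hCt
  have hC : C ≤ ε / 2 * runningIntegral μ g t := by
    rw [div_le_iff₀ hε] at hCt
    linarith
  have hgt := runningIntegral_add_integral_Ioc hT0 hTt (hg t)
  have htail : ‖∫ s in Ioc T t, w s * g s ∂μ‖ ≤ ε / 2 * runningIntegral μ g t := by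
    refine (norm_integral_le_of_norm_le (((hg t).mono_set (Ioc_subset_Ioc_left hT0)).const_mul
      (ε / 2)) ?_).trans ?_
    · filter_upwards [ae_restrict_mem measurableSet_Ioc] with s hs
      rw [norm_mul, Real.norm_of_nonneg (hg0 s), ← dist_zero_right]
      exact mul_le_mul_of_nonneg_right (hT s hs.1.le).1 (hg0 s)
    · rw [integral_const_mul]
      gcongr
      linarith [runningIntegral_nonneg (μ := μ) hg0 T]
  rw [Real.norm_of_nonneg (runningIntegral_nonneg hg0 t),
    ← runningIntegral_add_integral_Ioc hT0 hTt (hwg t)]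
  calc _ ≤ C + ‖∫ s in Ioc T t, w s * g s ∂μ‖ := norm_add_le _ _
    _ ≤ ε * runningIntegral μ g t := by linarith

theorem isLittleO_runningIntegral_mul_sub {w : ℝ → ℝ} {c : ℝ} (hg0 : ∀ s, 0 ≤ g s)
    (hg : ∀ t, IntegrableOn g (Ioc 0 t) μ)
    (hwg : ∀ t, IntegrableOn (fun s => w s * g s) (Ioc 0 t) μ)
    (hG : Tendsto (runningIntegral μ g) atTop atTop) (hw : Tendsto w atTop (𝓝 c)) :
    (fun t => runningIntegral μ (fun s => w s * g s) t - c * runningIntegral μ g t)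
      =o[atTop] runningIntegral μ g := by
  have hcg : ∀ t, IntegrableOn (fun s => c * g s) (Ioc 0 t) μ := fun t => (hg t).const_mul c
  refine (isLittleO_runningIntegral_mul (w := fun s => w s - c) hg0 hg (fun t => ?_) hG
    (by simpa using hw.sub_const c)).congr_left fun t => ?_
  · exact ((hwg t).sub (hcg t)).congr_fun (fun s _ => (sub_mul _ _ _).symm) measurableSet_Ioc
  · simp only [runningIntegral, sub_mul]
    rw [integral_sub (hwg t) (hcg t), integral_const_mul]

end RunningIntegral

section IntegrationByParts

variable {μ : Measure ℝ} {f g : ℝ → ℝ}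

theorem integral_runningIntegral_sub_mul [NullSingletonClass μ] [SFinite μ] {t : ℝ}
    (hf : IntegrableOn f (Ioc 0 t) μ) (hg : IntegrableOn g (Ioc 0 t) μ) :
    ∫ s in Ioc 0 t, (runningIntegral μ f t - runningIntegral μ f s) * g s ∂μ
      = ∫ u in Ioc 0 t, runningIntegral μ g u * f u ∂μ := by
  set ν := μ.restrict (Ioc 0 t)
  -- both sides are the integral of `g s * f u` over the triangle `0 < s < u ≤ t`
  set k : ℝ → ℝ → ℝ := fun s u => (Ioi s).indicator (fun u => g s * f u) u
  have hk : Integrable (Function.uncurry k) (ν.prod ν) := by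
    have : Function.uncurry k = {p : ℝ × ℝ | p.1 < p.2}.indicator fun p => g p.1 * f p.2 := by
      ext ⟨s, u⟩; simp [k, indicator_apply]
    rw [this]
    exact (hg.mul_prod hf).indicator (measurableSet_lt measurable_fst measurable_snd)
  have hleft : ∀ s ∈ Ioc 0 t,
      ∫ u, k s u ∂ν = (runningIntegral μ f t - runningIntegral μ f s) * g s := by
    intro s hs
    rw [setIntegral_indicator measurableSet_Ioi, Ioc_inter_Ioi, sup_eq_right.2 hs.1.le,
      integral_const_mul, ← runningIntegral_add_integral_Ioc hs.1.le hs.2 hf]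
    ring
  have hright : ∀ u ∈ Ioc 0 t, ∫ s, k s u ∂ν = runningIntegral μ g u * f u := by
    intro u hu
    have : ∀ s, k s u = (Iio u).indicator (fun s => g s * f u) s := fun s => by
      simp [k, indicator_apply]
    simp_rw [this]
    have hIoo : Ioc 0 t ∩ Iio u = Ioo 0 u :=
      Set.ext fun s => ⟨fun h => ⟨h.1.1, h.2⟩, fun h => ⟨⟨h.1, h.2.le.trans hu.2⟩, h.2⟩⟩
    rw [setIntegral_indicator measurableSet_Iio, hIoo, integral_mul_const, runningIntegral,
      integral_Ioc_eq_integral_Ioo]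
  rw [← setIntegral_congr_fun measurableSet_Ioc hleft,
    ← setIntegral_congr_fun measurableSet_Ioc hright]
  exact integral_integral_swap hk

theorem runningIntegral_mul_runningIntegral [NullSingletonClass μ] [SFinite μ]
    (hf0 : ∀ s, 0 ≤ f s) (hf : ∀ t, IntegrableOn f (Ioc 0 t) μ) {t : ℝ}
    (hg : IntegrableOn g (Ioc 0 t) μ) :
    runningIntegral μ f t * runningIntegral μ g t
      = runningIntegral μ (fun s => runningIntegral μ f s * g s) t
        + runningIntegral μ (fun s => runningIntegral μ g s * f s) t := by
  have hF := monotone_runningIntegral hf0 hf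
  have hsplit : ∀ s, runningIntegral μ f t * g s = runningIntegral μ f s * g s
      + (runningIntegral μ f t - runningIntegral μ f s) * g s := fun s => by ring
  calc runningIntegral μ f t * runningIntegral μ g t
      = ∫ s in Ioc 0 t, runningIntegral μ f t * g s ∂μ := (integral_const_mul _ _).symm
    _ = _ := by
      simp_rw [hsplit]
      rw [integral_add (hg.monotone_mul hF)
          (hg.antitone_mul fun a b hab => sub_le_sub_left (hF hab) _),
        integral_runningIntegral_sub_mul (hf t) hg]
      rfl

theorem runningIntegral_pow_succ [NullSingletonClass μ] [SFinite μ]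
    (hf0 : ∀ s, 0 ≤ f s) (hf : ∀ t, IntegrableOn f (Ioc 0 t) μ) (n : ℕ) (t : ℝ) :
    runningIntegral μ f t ^ (n + 1)
      = (n + 1) * runningIntegral μ (fun s => runningIntegral μ f s ^ n * f s) t := by
  induction n generalizing t with
  | zero => simp [runningIntegral]
  | succ n ih =>
    set F := runningIntegral μ f
    have hFn : Monotone fun s => (n + 1 : ℝ) * F s ^ n := fun a b hab =>
      mul_le_mul_of_nonneg_left (pow_le_pow_left₀ (runningIntegral_nonneg hf0 a)
        (monotone_runningIntegral hf0 hf hab) n) (by positivity)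
    have hprim : runningIntegral μ (fun s => (n + 1 : ℝ) * F s ^ n * f s)
        = fun s => F s ^ (n + 1) := by
      ext s
      simp only [ih s, mul_assoc, runningIntegral_const_mul]
    have hprod := runningIntegral_mul_runningIntegral hf0 hf ((hf t).monotone_mul hFn)
    have hrearr : runningIntegral μ (fun s => F s * ((n + 1 : ℝ) * F s ^ n * f s)) t
        = (n + 1) * runningIntegral μ (fun s => F s ^ (n + 1) * f s) t := by
      rw [← runningIntegral_const_mul]
      congr 2 with s
      ring
    rw [hprim, hrearr] at hprod
    rw [pow_succ', hprod]
    push_cast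
    ring

theorem exp_runningIntegral [NullSingletonClass μ] [SFinite μ]
    (hf0 : ∀ s, 0 ≤ f s) (hf : ∀ t, IntegrableOn f (Ioc 0 t) μ) (t : ℝ) :
    Real.exp (runningIntegral μ f t)
      = 1 + runningIntegral μ (fun s => Real.exp (runningIntegral μ f s) * f s) t := by
  set F := runningIntegral μ f
  have hexp : ∀ x, HasSum (fun n : ℕ => x ^ n / (n.factorial : ℝ)) (Real.exp x) := fun x => by
    simpa [Real.exp_eq_exp_ℝ] using NormedSpace.expSeries_div_hasSum_exp x
  set φ : ℕ → ℝ → ℝ := fun n s => F s ^ n / n.factorial * f s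
  have hφ : ∀ n, IntegrableOn (φ n) (Ioc 0 t) μ := fun n =>
    (hf t).monotone_mul fun a b hab => by
      gcongr
      exacts [runningIntegral_nonneg hf0 a, monotone_runningIntegral hf0 hf hab]
  have hφint : ∀ n, ∫ s in Ioc 0 t, φ n s ∂μ = F t ^ (n + 1) / (n + 1).factorial := fun n => by
    simp only [φ, div_mul_eq_mul_div, integral_div]
    rw [← runningIntegral, ← mul_div_mul_left _ _ (Nat.cast_add_one_ne_zero n),
      ← runningIntegral_pow_succ hf0 hf, Nat.factorial_succ]
    push_cast
    ring
  have hφ0 : ∀ n s, 0 ≤ φ n s := fun n s => by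
    have := runningIntegral_nonneg (μ := μ) hf0 s
    have := hf0 s
    positivity
  have hsum := hasSum_integral_of_summable_integral_norm hφ (by
    simp_rw [Real.norm_of_nonneg (hφ0 _ _), hφint]
    exact (hexp (F t)).summable.comp_injective (add_left_injective 1))
  have htsum : ∀ s, ∑' n, φ n s = Real.exp (F s) * f s := fun s =>
    ((hexp (F s)).mul_right (f s)).tsum_eq
  simp_rw [htsum, hφint] at hsum
  have htail := (hasSum_nat_add_iff' 1).2 (hexp (F t))
  simp only [Finset.range_one, Finset.sum_singleton, pow_zero, Nat.factorial_zero, Nat.cast_one,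
    div_one] at htail
  rw [runningIntegral, hsum.unique htail]
  ring

theorem runningIntegral_sq [NullSingletonClass μ] [SFinite μ]
    (hf0 : ∀ s, 0 ≤ f s) (hf : ∀ t, IntegrableOn f (Ioc 0 t) μ) (t : ℝ) :
    runningIntegral μ f t ^ 2
      = runningIntegral μ (fun s => 2 * (runningIntegral μ f s * f s)) t := by
  rw [runningIntegral_const_mul, runningIntegral_pow_succ hf0 hf 1]
  norm_num

theorem runningIntegral_sq_mul_runningIntegral [NullSingletonClass μ] [SFinite μ]
    (hf0 : ∀ s, 0 ≤ f s) (hf : ∀ t, IntegrableOn f (Ioc 0 t) μ) {t : ℝ}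
    (hg : IntegrableOn g (Ioc 0 t) μ) :
    runningIntegral μ f t ^ 2 * runningIntegral μ g t
      = runningIntegral μ (fun s => runningIntegral μ f s ^ 2 * g s) t
        + 2 * runningIntegral μ
          (fun s => runningIntegral μ f s * (runningIntegral μ g s * f s)) t := by
  have hFf0 : ∀ s, 0 ≤ 2 * (runningIntegral μ f s * f s) := fun s =>
    mul_nonneg zero_le_two (mul_nonneg (runningIntegral_nonneg hf0 s) (hf0 s))
  have hFf : ∀ t, IntegrableOn (fun s => 2 * (runningIntegral μ f s * f s)) (Ioc 0 t) μ :=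
    fun t => ((hf t).monotone_mul (monotone_runningIntegral hf0 hf)).const_mul 2
  simp only [runningIntegral_sq hf0 hf, runningIntegral_mul_runningIntegral hFf0 hFf hg,
    ← runningIntegral_const_mul]
  congr 2 with s
  ring

theorem integral_sq_runningIntegral_sub_mul [NullSingletonClass μ] [SFinite μ]
    (hf0 : ∀ s, 0 ≤ f s) (hg0 : ∀ s, 0 ≤ g s)
    (hf : ∀ t, IntegrableOn f (Ioc 0 t) μ) (hg : ∀ t, IntegrableOn g (Ioc 0 t) μ) (t : ℝ) :
    ∫ s in Ioc 0 t, (runningIntegral μ f t - runningIntegral μ f s) ^ 2 * g s ∂μ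
      = 2 * ∫ s in Ioc 0 t, (runningIntegral μ f t - runningIntegral μ f s)
          * (runningIntegral μ g s * f s) ∂μ := by
  have hP1 := runningIntegral_mul_runningIntegral hf0 hf (hg t)
  have hP2 := runningIntegral_sq_mul_runningIntegral hf0 hf (hg t)
  set F := runningIntegral μ f
  set G := runningIntegral μ g
  have hF : Monotone F := monotone_runningIntegral hf0 hf
  have hF2 : Monotone fun s => F s ^ 2 := fun a b hab =>
    pow_le_pow_left₀ (runningIntegral_nonneg hf0 a) (hF hab) 2
  have hFg := (hg t).monotone_mul hF
  have hGf := (hf t).monotone_mul (monotone_runningIntegral hg0 hg)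
  have hlhs : ∫ s in Ioc 0 t, (F t - F s) ^ 2 * g s ∂μ
      = F t ^ 2 * G t - 2 * F t * runningIntegral μ (fun s => F s * g s) t
        + runningIntegral μ (fun s => F s ^ 2 * g s) t := by
    have : ∀ s, (F t - F s) ^ 2 * g s
        = F t ^ 2 * g s - 2 * F t * (F s * g s) + F s ^ 2 * g s := fun s => by ring
    simp_rw [this]
    rw [integral_add ?_ ((hg t).monotone_mul hF2), integral_sub ((hg t).const_mul _)
      (hFg.const_mul _), integral_const_mul, integral_const_mul]
    · rfl
    · exact ((hg t).const_mul _).sub (hFg.const_mul _)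
  have hrhs : ∫ s in Ioc 0 t, (F t - F s) * (G s * f s) ∂μ
      = F t * runningIntegral μ (fun s => G s * f s) t
        - runningIntegral μ (fun s => F s * (G s * f s)) t := by
    simp_rw [sub_mul]
    rw [integral_sub (hGf.const_mul _) (hGf.monotone_mul hF), integral_const_mul]
    rfl
  rw [hlhs, hrhs]
  linear_combination 2 * F t * hP1 - hP2

end IntegrationByParts

theorem StieltjesFunction.nullSingletonClass_measure {K : StieltjesFunction ℝ}
    (hK : Continuous K) : NullSingletonClass K.measure :=
  ⟨fun x => by
    rw [K.measure_singleton, leftLim_eq_of_tendsto ((hK.tendsto x).mono_left nhdsWithin_le_nhds),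
      sub_self, ENNReal.ofReal_zero]⟩

noncomputable def BAlphaDensity (K : StieltjesFunction ℝ) (β ℓ α : ℝ → ℝ) (s : ℝ) : ℝ :=
  α s * β s * (angL K β ℓ s)⁻¹ * Gam K β s

noncomputable def epsOneDensity (K : StieltjesFunction ℝ) (β ℓ : ℝ → ℝ) (s : ℝ) : ℝ :=
  β s * (angL K β ℓ s)⁻¹ * Gam K β s ^ 2

section Model

variable {K : StieltjesFunction ℝ} {β ℓ α : ℝ → ℝ}

theorem Gam_pos (t : ℝ) : 0 < Gam K β t :=
  Real.exp_pos _

theorem one_le_Gam (hβ0 : ∀ s, 0 ≤ β s) (t : ℝ) : 1 ≤ Gam K β t :=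
  Real.one_le_exp (runningIntegral_nonneg hβ0 t)

theorem monotone_Gam_pow (hβ0 : ∀ s, 0 ≤ β s) (hβ : ∀ t, IntegrableOn β (Ioc 0 t) K.measure)
    (n : ℕ) : Monotone fun t => Gam K β t ^ n := fun _ _ hst =>
  pow_le_pow_left₀ (zero_le_one.trans (one_le_Gam hβ0 _))
    (Real.exp_monotone (monotone_runningIntegral hβ0 hβ hst)) n

theorem Gam_eq_one_add_runningIntegral [NullSingletonClass K.measure] (hβ0 : ∀ s, 0 ≤ β s)
    (hβ : ∀ t, IntegrableOn β (Ioc 0 t) K.measure) (t : ℝ) :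
    Gam K β t = 1 + runningIntegral K.measure (fun s => Gam K β s * β s) t :=
  exp_runningIntegral hβ0 hβ t

theorem one_le_angL (t : ℝ) : 1 ≤ angL K β ℓ t :=
  le_add_of_nonneg_right (setIntegral_nonneg measurableSet_Ioc fun s _ => by positivity)

theorem angL_sub_one (t : ℝ) :
    angL K β ℓ t - 1 = runningIntegral K.measure (fun s => Gam K β s ^ 2 * ℓ s ^ 2) t :=
  add_sub_cancel_left _ _

theorem integrableOn_Gam_sq_mul_sq (hβ0 : ∀ s, 0 ≤ β s)
    (hβ : ∀ t, IntegrableOn β (Ioc 0 t) K.measure)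
    (hℓ : IntegrableOn (fun s => ℓ s ^ 2) (Ioi 0) K.measure) (t : ℝ) :
    IntegrableOn (fun s => Gam K β s ^ 2 * ℓ s ^ 2) (Ioc 0 t) K.measure :=
  (hℓ.mono_set Ioc_subset_Ioi_self).monotone_mul (monotone_Gam_pow hβ0 hβ 2)

theorem monotone_angL (hβ0 : ∀ s, 0 ≤ β s) (hβ : ∀ t, IntegrableOn β (Ioc 0 t) K.measure)
    (hℓ : IntegrableOn (fun s => ℓ s ^ 2) (Ioi 0) K.measure) : Monotone (angL K β ℓ) :=
  fun _ _ hst => add_le_add_right (monotone_runningIntegral (fun s => by positivity)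
    (integrableOn_Gam_sq_mul_sq hβ0 hβ hℓ) hst) 1

theorem angL_le_mul_Gam_sq (hβ0 : ∀ s, 0 ≤ β s) (hβ : ∀ t, IntegrableOn β (Ioc 0 t) K.measure)
    (hℓ : IntegrableOn (fun s => ℓ s ^ 2) (Ioi 0) K.measure) (t : ℝ) :
    angL K β ℓ t ≤ (1 + ∫ s in Ioi 0, ℓ s ^ 2 ∂K.measure) * Gam K β t ^ 2 := by
  have hℓt := hℓ.mono_set (Ioc_subset_Ioi_self : Ioc (0 : ℝ) t ⊆ Ioi 0)
  have hint : ∫ s in Ioc 0 t, Gam K β s ^ 2 * ℓ s ^ 2 ∂K.measure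
      ≤ Gam K β t ^ 2 * ∫ s in Ioi 0, ℓ s ^ 2 ∂K.measure :=
    calc _ ≤ ∫ s in Ioc 0 t, Gam K β t ^ 2 * ℓ s ^ 2 ∂K.measure :=
          setIntegral_mono_on (integrableOn_Gam_sq_mul_sq hβ0 hβ hℓ t) (hℓt.const_mul _)
            measurableSet_Ioc fun s hs =>
              mul_le_mul_of_nonneg_right (monotone_Gam_pow hβ0 hβ 2 hs.2) (sq_nonneg _)
      _ ≤ _ := by
        rw [integral_const_mul]
        exact mul_le_mul_of_nonneg_left (setIntegral_mono_set hℓ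
          (ae_of_all _ fun s => sq_nonneg _) Ioc_subset_Ioi_self.eventuallyLE) (sq_nonneg _)
  have hΓ : 1 ≤ Gam K β t ^ 2 := one_le_pow₀ (one_le_Gam hβ0 t)
  rw [angL, add_mul, one_mul]
  linarith

theorem integrableOn_angL_inv_mul_Gam_pow_mul (hβ0 : ∀ s, 0 ≤ β s)
    (hβ : ∀ t, IntegrableOn β (Ioc 0 t) K.measure)
    (hℓ : IntegrableOn (fun s => ℓ s ^ 2) (Ioi 0) K.measure) (n : ℕ) {g : ℝ → ℝ} {t : ℝ}
    (hg : IntegrableOn g (Ioc 0 t) K.measure) :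
    IntegrableOn (fun s => (angL K β ℓ s)⁻¹ * (Gam K β s ^ n * g s)) (Ioc 0 t) K.measure :=
  (hg.monotone_mul (monotone_Gam_pow hβ0 hβ n)).antitone_mul fun _ _ hst =>
    inv_anti₀ (zero_lt_one.trans_le (one_le_angL _)) (monotone_angL hβ0 hβ hℓ hst)

theorem integrableOn_BAlphaDensity (hβ0 : ∀ s, 0 ≤ β s)
    (hβ : ∀ t, IntegrableOn β (Ioc 0 t) K.measure)
    (hℓ : IntegrableOn (fun s => ℓ s ^ 2) (Ioi 0) K.measure)
    (hαβ : ∀ t, IntegrableOn (fun s => α s * β s) (Ioc 0 t) K.measure) (t : ℝ) :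
    IntegrableOn (BAlphaDensity K β ℓ α) (Ioc 0 t) K.measure :=
  (integrableOn_angL_inv_mul_Gam_pow_mul hβ0 hβ hℓ 1 (hαβ t)).congr_fun
    (fun s _ => by simp only [BAlphaDensity]; ring) measurableSet_Ioc

theorem integrableOn_mul_epsOneDensity (hβ0 : ∀ s, 0 ≤ β s)
    (hβ : ∀ t, IntegrableOn β (Ioc 0 t) K.measure)
    (hℓ : IntegrableOn (fun s => ℓ s ^ 2) (Ioi 0) K.measure)
    (hαβ : ∀ t, IntegrableOn (fun s => α s * β s) (Ioc 0 t) K.measure) (t : ℝ) :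
    IntegrableOn (fun s => α s * epsOneDensity K β ℓ s) (Ioc 0 t) K.measure :=
  (integrableOn_angL_inv_mul_Gam_pow_mul hβ0 hβ hℓ 2 (hαβ t)).congr_fun
    (fun s _ => by simp only [epsOneDensity]; ring) measurableSet_Ioc

theorem integrableOn_epsOneDensity (hβ0 : ∀ s, 0 ≤ β s)
    (hβ : ∀ t, IntegrableOn β (Ioc 0 t) K.measure)
    (hℓ : IntegrableOn (fun s => ℓ s ^ 2) (Ioi 0) K.measure) (t : ℝ) :
    IntegrableOn (epsOneDensity K β ℓ) (Ioc 0 t) K.measure := by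
  simpa using integrableOn_mul_epsOneDensity (α := fun _ => 1) hβ0 hβ hℓ (by simpa using hβ) t

theorem BAlphaDensity_nonneg (hβ0 : ∀ s, 0 ≤ β s) (hα0 : ∀ s, 0 ≤ α s) (s : ℝ) :
    0 ≤ BAlphaDensity K β ℓ α s :=
  mul_nonneg (mul_nonneg (mul_nonneg (hα0 s) (hβ0 s))
    (inv_nonneg.2 (zero_le_one.trans (one_le_angL s)))) (Gam_pos s).le

theorem epsOneDensity_nonneg (hβ0 : ∀ s, 0 ≤ β s) (s : ℝ) : 0 ≤ epsOneDensity K β ℓ s :=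
  mul_nonneg (mul_nonneg (hβ0 s) (inv_nonneg.2 (zero_le_one.trans (one_le_angL s)))) (sq_nonneg _)

theorem tendsto_runningIntegral_epsOneDensity_atTop (hβ0 : ∀ s, 0 ≤ β s)
    (hβ : ∀ t, IntegrableOn β (Ioc 0 t) K.measure)
    (hβtop : ∫⁻ s in Ioi 0, ENNReal.ofReal (β s) ∂K.measure = ⊤)
    (hℓ : IntegrableOn (fun s => ℓ s ^ 2) (Ioi 0) K.measure) :
    Tendsto (runningIntegral K.measure (epsOneDensity K β ℓ)) atTop atTop := by
  set L := ∫ s in Ioi 0, ℓ s ^ 2 ∂K.measure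
  have hL : 0 < 1 + L := add_pos_of_pos_of_nonneg one_pos
    (setIntegral_nonneg measurableSet_Ioi fun s _ => sq_nonneg _)
  have hlow : ∀ s, (1 + L)⁻¹ * β s ≤ epsOneDensity K β ℓ s := fun s => by
    have hΓ : Gam K β s ≠ 0 := (Gam_pos s).ne'
    calc (1 + L)⁻¹ * β s = β s * ((1 + L) * Gam K β s ^ 2)⁻¹ * Gam K β s ^ 2 := by
          field_simp
      _ ≤ epsOneDensity K β ℓ s :=
        mul_le_mul_of_nonneg_right (mul_le_mul_of_nonneg_left (inv_anti₀
          (zero_lt_one.trans_le (one_le_angL s)) (angL_le_mul_Gam_sq hβ0 hβ hℓ s)) (hβ0 s))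
          (sq_nonneg _)
  refine tendsto_atTop_mono (fun t => ?_)
    ((tendsto_runningIntegral_atTop hβ0 hβ hβtop).const_mul_atTop (inv_pos.2 hL))
  rw [← runningIntegral_const_mul]
  exact setIntegral_mono_on ((hβ t).const_mul _) (integrableOn_epsOneDensity hβ0 hβ hℓ t)
    measurableSet_Ioc fun s _ => hlow s

theorem tendsto_runningIntegral_angL_sub_one_mul_div_Gam [NullSingletonClass K.measure]
    (hβ0 : ∀ s, 0 ≤ β s) (hβ : ∀ t, IntegrableOn β (Ioc 0 t) K.measure)
    (hβtop : ∫⁻ s in Ioi 0, ENNReal.ofReal (β s) ∂K.measure = ⊤)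
    (hℓ : IntegrableOn (fun s => ℓ s ^ 2) (Ioi 0) K.measure)
    (hL : Tendsto (angL K β ℓ) atTop atTop)
    (hαβ : ∀ t, IntegrableOn (fun s => α s * β s) (Ioc 0 t) K.measure)
    {a : ℝ} (hα : Tendsto α atTop (𝓝 a)) :
    Tendsto (fun t => runningIntegral K.measure
      (fun s => (angL K β ℓ s - 1) * BAlphaDensity K β ℓ α s) t / Gam K β t) atTop (𝓝 a) := by
  have hΓβ0 : ∀ s, 0 ≤ Gam K β s * β s := fun s => mul_nonneg (Gam_pos s).le (hβ0 s)
  have hΓβ : ∀ t, IntegrableOn (fun s => Gam K β s * β s) (Ioc 0 t) K.measure := fun t => by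
    simpa using (hβ t).monotone_mul (monotone_Gam_pow hβ0 hβ 1)
  have hN : Tendsto (runningIntegral K.measure (fun s => Gam K β s * β s)) atTop atTop :=
    tendsto_atTop_mono (fun t => setIntegral_mono_on (hβ t) (hΓβ t) measurableSet_Ioc
      fun s _ => le_mul_of_one_le_left (hβ0 s) (one_le_Gam hβ0 s))
      (tendsto_runningIntegral_atTop hβ0 hβ hβtop)
  have hdensity : (fun s => (angL K β ℓ s - 1) * BAlphaDensity K β ℓ α s)
      = fun s => α s * (1 - (angL K β ℓ s)⁻¹) * (Gam K β s * β s) := funext fun s => by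
    have := (zero_lt_one.trans_le (one_le_angL (K := K) (β := β) (ℓ := ℓ) s)).ne'
    simp only [BAlphaDensity]
    field_simp
  have hw : Tendsto (fun s => α s * (1 - (angL K β ℓ s)⁻¹)) atTop (𝓝 a) := by
    simpa using hα.mul ((tendsto_const_nhds (x := (1 : ℝ))).sub hL.inv_tendsto_atTop)
  have hwg : ∀ t, IntegrableOn (fun s => α s * (1 - (angL K β ℓ s)⁻¹) * (Gam K β s * β s))
      (Ioc 0 t) K.measure := fun t => by
    rw [← hdensity]
    exact (integrableOn_BAlphaDensity hβ0 hβ hℓ hαβ t).monotone_mul fun _ _ hst =>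
      sub_le_sub_right (monotone_angL hβ0 hβ hℓ hst) 1
  refine (tendsto_div_one_add_of_isLittleO hN
    (isLittleO_runningIntegral_mul_sub hΓβ0 hΓβ hwg hN hw)).congr fun t => ?_
  rw [hdensity, Gam_eq_one_add_runningIntegral hβ0 hβ t]

theorem BtildeAlpha_eq [NullSingletonClass K.measure] (hβ0 : ∀ s, 0 ≤ β s)
    (hβ : ∀ t, IntegrableOn β (Ioc 0 t) K.measure)
    (hℓ : IntegrableOn (fun s => ℓ s ^ 2) (Ioi 0) K.measure) (hα0 : ∀ s, 0 ≤ α s)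
    (hαβ : ∀ t, IntegrableOn (fun s => α s * β s) (Ioc 0 t) K.measure) (t : ℝ) :
    BtildeAlpha K β ℓ α t = 2 * runningIntegral K.measure (fun s => runningIntegral K.measure
      (fun u => (angL K β ℓ u - 1) * BAlphaDensity K β ℓ α u) s * BAlphaDensity K β ℓ α s) t := by
  have hB := integrableOn_BAlphaDensity hβ0 hβ hℓ hαβ
  have hL1 : Monotone fun s => angL K β ℓ s - 1 := fun _ _ hst =>
    sub_le_sub_right (monotone_angL hβ0 hβ hℓ hst) 1
  set B := runningIntegral K.measure (BAlphaDensity K β ℓ α)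
  calc BtildeAlpha K β ℓ α t
      = ∫ s in Ioc 0 t, (B t - B s) ^ 2 * (Gam K β s ^ 2 * ℓ s ^ 2) ∂K.measure := by
        simp only [BtildeAlpha, mul_assoc]
        rfl
    _ = 2 * ∫ s in Ioc 0 t, (B t - B s)
          * ((angL K β ℓ s - 1) * BAlphaDensity K β ℓ α s) ∂K.measure := by
        simpa only [← angL_sub_one] using integral_sq_runningIntegral_sub_mul
          (BAlphaDensity_nonneg hβ0 hα0) (fun s => by positivity) hB
          (integrableOn_Gam_sq_mul_sq hβ0 hβ hℓ) t
    _ = _ := by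
        rw [integral_runningIntegral_sub_mul (hB t) ((hB t).monotone_mul hL1)]
        rfl

theorem isLittleO_epsAlpha_sub_mul (hβ0 : ∀ s, 0 ≤ β s)
    (hβ : ∀ t, IntegrableOn β (Ioc 0 t) K.measure)
    (hβtop : ∫⁻ s in Ioi 0, ENNReal.ofReal (β s) ∂K.measure = ⊤)
    (hℓ : IntegrableOn (fun s => ℓ s ^ 2) (Ioi 0) K.measure)
    (hαβ : ∀ t, IntegrableOn (fun s => α s * β s) (Ioc 0 t) K.measure)
    {a : ℝ} (hα : Tendsto α atTop (𝓝 a)) :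
    (fun t => epsAlpha K β ℓ α t - a * runningIntegral K.measure (epsOneDensity K β ℓ) t)
      =o[atTop] runningIntegral K.measure (epsOneDensity K β ℓ) := by
  have hI := tendsto_runningIntegral_epsOneDensity_atTop hβ0 hβ hβtop hℓ
  have hone : (fun _ => (1 : ℝ)) =o[atTop] runningIntegral K.measure (epsOneDensity K β ℓ) :=
    isLittleO_const_left.2 (Or.inr (tendsto_norm_atTop_atTop.comp hI))
  refine (hone.add (isLittleO_runningIntegral_mul_sub (epsOneDensity_nonneg hβ0)
    (integrableOn_epsOneDensity hβ0 hβ hℓ) (integrableOn_mul_epsOneDensity hβ0 hβ hℓ hαβ)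
    hI hα)).congr_left fun t => ?_
  simp only [epsAlpha, runningIntegral, epsOneDensity]
  ring_nf

theorem isLittleO_BtildeAlpha_sub_mul [NullSingletonClass K.measure] (hβ0 : ∀ s, 0 ≤ β s)
    (hβ : ∀ t, IntegrableOn β (Ioc 0 t) K.measure)
    (hβtop : ∫⁻ s in Ioi 0, ENNReal.ofReal (β s) ∂K.measure = ⊤)
    (hℓ : IntegrableOn (fun s => ℓ s ^ 2) (Ioi 0) K.measure)
    (hL : Tendsto (angL K β ℓ) atTop atTop) (hα0 : ∀ s, 0 ≤ α s)
    (hαβ : ∀ t, IntegrableOn (fun s => α s * β s) (Ioc 0 t) K.measure)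
    {a : ℝ} (hα : Tendsto α atTop (𝓝 a)) :
    (fun t => BtildeAlpha K β ℓ α t - 2 * a ^ 2 * runningIntegral K.measure (epsOneDensity K β ℓ) t)
      =o[atTop] runningIntegral K.measure (epsOneDensity K β ℓ) := by
  obtain ⟨P, hP⟩ : ∃ P, P = runningIntegral K.measure
      (fun s => (angL K β ℓ s - 1) * BAlphaDensity K β ℓ α s) := ⟨_, rfl⟩
  have hPmono : Monotone P := hP ▸ monotone_runningIntegral
    (fun s => mul_nonneg (sub_nonneg.2 (one_le_angL s)) (BAlphaDensity_nonneg hβ0 hα0 s))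
    (fun t => (integrableOn_BAlphaDensity hβ0 hβ hℓ hαβ t).monotone_mul
      fun _ _ hst => sub_le_sub_right (monotone_angL hβ0 hβ hℓ hst) 1)
  have hPB : ∀ s, P s * BAlphaDensity K β ℓ α s = P s / Gam K β s * α s * epsOneDensity K β ℓ s :=
    fun s => by
      have := (Gam_pos (K := K) (β := β) s).ne'
      simp only [BAlphaDensity, epsOneDensity]
      field_simp
  have hw := (tendsto_runningIntegral_angL_sub_one_mul_div_Gam hβ0 hβ hβtop hℓ hL hαβ hα).mul hα
  rw [← hP] at hw
  have hBP : ∀ t, BtildeAlpha K β ℓ α t = 2 * runningIntegral K.measure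
      (fun s => P s / Gam K β s * α s * epsOneDensity K β ℓ s) t := fun t => by
    rw [BtildeAlpha_eq hβ0 hβ hℓ hα0 hαβ t, ← hP]
    simp only [hPB]
  refine ((isLittleO_runningIntegral_mul_sub (epsOneDensity_nonneg hβ0)
    (integrableOn_epsOneDensity hβ0 hβ hℓ) (fun t => ?_)
    (tendsto_runningIntegral_epsOneDensity_atTop hβ0 hβ hβtop hℓ) hw).const_mul_left 2).congr_left
    fun t => ?_
  · simp only [← hPB]
    exact (integrableOn_BAlphaDensity hβ0 hβ hℓ hαβ t).monotone_mul hPmono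
  · rw [hBP]
    ring

end Model

theorem eps_one_mul_Btilde_div_epsAlpha_sq_tendsto_two_general (K : StieltjesFunction ℝ)
    (hKc : Continuous fun x => K x)
    (β ℓ : ℝ → ℝ) (hβmeas : Measurable β) (hβ0 : ∀ t, 0 ≤ β t) (hℓmeas : Measurable ℓ)
    (hβloc : ∀ t : ℝ, (∫⁻ s in Ioc 0 t, ENNReal.ofReal (β s) ∂K.measure) < ⊤)
    (hβtop : (∫⁻ s in Ioi (0 : ℝ), ENNReal.ofReal (β s) ∂K.measure) = ⊤)
    (hℓ2 : (∫⁻ s in Ioi (0 : ℝ), ENNReal.ofReal (ℓ s ^ 2) ∂K.measure) < ⊤)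
    (hLtop : Tendsto (angL K β ℓ) atTop atTop)
    (α : ℝ → ℝ) (hαmeas : Measurable α) (hα0 : ∀ t, 0 ≤ α t)
    (a : ℝ) (ha : 0 < a) (hα : Tendsto α atTop (𝓝 a))
    (hαβloc : ∀ t : ℝ, (∫⁻ s in Ioc 0 t, ENNReal.ofReal (α s * β s) ∂K.measure) < ⊤) :
    Tendsto (fun t =>
        epsAlpha K β ℓ (fun _ => 1) t * BtildeAlpha K β ℓ α t / (epsAlpha K β ℓ α t) ^ 2)
      atTop (𝓝 2) := by
  have := K.nullSingletonClass_measure hKc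
  have hβ : ∀ t, IntegrableOn β (Ioc 0 t) K.measure := fun t =>
    (lintegral_ofReal_ne_top_iff_integrable hβmeas.aestronglyMeasurable
      (ae_of_all _ hβ0)).1 (hβloc t).ne
  have hαβ : ∀ t, IntegrableOn (fun s => α s * β s) (Ioc 0 t) K.measure := fun t =>
    (lintegral_ofReal_ne_top_iff_integrable (hαmeas.mul hβmeas).aestronglyMeasurable
      (ae_of_all _ fun s => mul_nonneg (hα0 s) (hβ0 s))).1 (hαβloc t).ne
  have hℓ : IntegrableOn (fun s => ℓ s ^ 2) (Ioi 0) K.measure :=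
    (lintegral_ofReal_ne_top_iff_integrable (hℓmeas.pow_const 2).aestronglyMeasurable
      (ae_of_all _ fun s => sq_nonneg _)).1 hℓ2.ne
  set I := runningIntegral K.measure (epsOneDensity K β ℓ)
  have hI : Tendsto I atTop atTop := tendsto_runningIntegral_epsOneDensity_atTop hβ0 hβ hβtop hℓ
  have hεone : epsAlpha K β ℓ (fun _ => 1) ~[atTop] fun t => 1 * I t :=
    isEquivalent_const_mul_of_isLittleO one_ne_zero
      (isLittleO_epsAlpha_sub_mul hβ0 hβ hβtop hℓ (by simpa using hβ) tendsto_const_nhds)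
  have hεα : epsAlpha K β ℓ α ~[atTop] fun t => a * I t :=
    isEquivalent_const_mul_of_isLittleO ha.ne' (isLittleO_epsAlpha_sub_mul hβ0 hβ hβtop hℓ hαβ hα)
  have hB : BtildeAlpha K β ℓ α ~[atTop] fun t => 2 * a ^ 2 * I t :=
    isEquivalent_const_mul_of_isLittleO (by positivity)
      (isLittleO_BtildeAlpha_sub_mul hβ0 hβ hβtop hℓ hLtop hα0 hαβ hα)
  refine ((hεone.mul hB).div (hεα.pow 2)).symm.tendsto_nhds (tendsto_const_nhds.congr' ?_)
  filter_upwards [hI.eventually_gt_atTop 0] with t ht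
  simp only [Pi.mul_apply, Pi.div_apply, Pi.pow_apply]
  field_simp

/-- Eq. (2.10) of Section 3 (the core of Proposition 3.2 on the Polyak averaging procedure):
under the stated conditions, `ε_t^{(1)} B̃_t^{(α)} / (ε_t^{(α)})² → 2` as `t → ∞`. -/
theorem eps_one_mul_Btilde_div_epsAlpha_sq_tendsto_two (K : StieltjesFunction ℝ)
    (hKc : Continuous fun x => K x) (hK0 : K 0 = 0)
    (β ℓ : ℝ → ℝ) (hβmeas : Measurable β) (hβ0 : ∀ t, 0 ≤ β t) (hℓmeas : Measurable ℓ)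
    (hβloc : ∀ t : ℝ, (∫⁻ s in Ioc 0 t, ENNReal.ofReal (β s) ∂K.measure) < ⊤)
    (hβtop : (∫⁻ s in Ioi (0 : ℝ), ENNReal.ofReal (β s) ∂K.measure) = ⊤)
    (hℓ2 : (∫⁻ s in Ioi (0 : ℝ), ENNReal.ofReal (ℓ s ^ 2) ∂K.measure) < ⊤)
    (hLtop : Tendsto (angL K β ℓ) atTop atTop)
    (α : ℝ → ℝ) (hαmeas : Measurable α) (hα0 : ∀ t, 0 ≤ α t)
    (a : ℝ) (ha : 0 < a) (hα : Tendsto α atTop (𝓝 a))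
    (hαβloc : ∀ t : ℝ, (∫⁻ s in Ioc 0 t, ENNReal.ofReal (α s * β s) ∂K.measure) < ⊤) :
    Tendsto (fun t =>
        epsAlpha K β ℓ (fun _ => 1) t * BtildeAlpha K β ℓ α t / (epsAlpha K β ℓ α t) ^ 2)
      atTop (𝓝 2) :=
  eps_one_mul_Btilde_div_epsAlpha_sq_tendsto_two_general K hKc β ℓ hβmeas hβ0 hℓmeas hβloc hβtop hℓ2
    hLtop α hαmeas hα0 a ha hα hαβloc
end
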